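/- arXiv:1912.09205 — 3 statements merged into one kernel-verified Lean document; each statement's English description precedes it below -/
import Mathlib

section
/- Let κ : ℝ → ℝ satisfy κ(t) → ∞ as t → ∞, let ω, g* be real numbers, and let g : ℝ → ℝ with g(t) → g* as t → ∞. If p(t) = [1 + exp(−κ(t)·(g(t) − ω))]^{-1} converges to some p* < 1, then g* ≤ ω. (That is, a necessary condition for an entity following the generalized reciprocity rule to have steady-state propensity to cooperate p*_i < 1 is that its steady-state growth rate equals its unconditional-defector growth rate, given the prevention-of-exploitation bound g* ≥ ω.) -/
open Filter Real in
theorem stmt_14 (κ : ℝ → ℝ) (hκ : Tendsto κ atTop atTop)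
    (ω gstar : ℝ) (g : ℝ → ℝ) (hgt : Tendsto g atTop (nhds gstar))
    (pstar : ℝ) (hp : pstar < 1)
    (hconv : Tendsto (fun t => (1 + Real.exp (-κ t * (g t - ω)))⁻¹) atTop (nhds pstar)) :
    gstar ≤ ω := by
  by_contra h
  push_neg at h
  have h1 : Tendsto (fun t => g t - ω) atTop (nhds (gstar - ω)) :=
    hgt.sub tendsto_const_nhds
  have h2 : Tendsto (fun t => κ t * (g t - ω)) atTop atTop :=
    Tendsto.atTop_mul_pos (by linarith) hκ h1
  have h3 : Tendsto (fun t => -κ t * (g t - ω)) atTop atBot := by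
    have := tendsto_neg_atTop_atBot.comp h2
    simp only [Function.comp_def] at this
    exact this.congr fun t => (neg_mul _ _).symm
  have h4 : Tendsto (fun t => (1 + Real.exp (-κ t * (g t - ω)))⁻¹) atTop (nhds 1) := by
    have := ((tendsto_const_nhds.add (Real.tendsto_exp_atBot.comp h3)).inv₀ (show (1:ℝ)+0 ≠ 0 by norm_num))
    simpa using this
  have := tendsto_nhds_unique hconv h4
  linarith
end

section
/- Let g_i, g_j be real numbers with g_i > g_j, let φ_i, φ_j : ℝ → ℝ satisfy φ_k(t)/t → 0 as t → ∞, and define y_k(t) = exp(t·g_k + φ_k(t)). Let ξ ≥ 0, η ≥ 0, A > 0 and 0 < α < 1. Then the quantity A·y_i(T)/(ξ + exp(η·T^α)) − y_j(T) is positive for all sufficiently large T, and (1/T)·log( A·y_i(T)/(ξ + exp(η·T^α)) − y_j(T) ) → g_i as T → ∞. -/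
open Filter Real in
lemma aux_L (ξ η α : ℝ) (hξ : 0 ≤ ξ) (hη : 0 ≤ η) (hα0 : 0 < α) (hα1 : α < 1) :
    Tendsto (fun T : ℝ => Real.log (ξ + Real.exp (η * T ^ α)) / T) atTop (nhds 0) := by
  have hub : Tendsto (fun T : ℝ => Real.log (ξ + 1) / T + η * T ^ (α - 1)) atTop (nhds 0) := by
    have h1 : Tendsto (fun T : ℝ => Real.log (ξ + 1) / T) atTop (nhds 0) :=
      tendsto_const_nhds.div_atTop tendsto_id
    have h2 : Tendsto (fun T : ℝ => T ^ (α - 1)) atTop (nhds 0) := by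
      have := tendsto_rpow_neg_atTop (y := 1 - α) (by linarith)
      refine this.congr (fun T => by ring_nf)
    simpa using h1.add (h2.const_mul η)
  refine tendsto_of_tendsto_of_tendsto_of_le_of_le' tendsto_const_nhds hub ?_ ?_
  · filter_upwards [eventually_ge_atTop (1:ℝ)] with T hT
    have hT0 : (0:ℝ) < T := by linarith
    have h1 : (1:ℝ) ≤ ξ + Real.exp (η * T ^ α) := by
      have : (1:ℝ) ≤ Real.exp (η * T ^ α) :=
        Real.one_le_exp (mul_nonneg hη (Real.rpow_nonneg hT0.le α))
      linarith
    exact div_nonneg (Real.log_nonneg h1) hT0.le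
  · filter_upwards [eventually_ge_atTop (1:ℝ)] with T hT
    have hT0 : (0:ℝ) < T := by linarith
    have hexp1 : (1:ℝ) ≤ Real.exp (η * T ^ α) :=
      Real.one_le_exp (mul_nonneg hη (Real.rpow_nonneg hT0.le α))
    have hle : ξ + Real.exp (η * T ^ α) ≤ (ξ + 1) * Real.exp (η * T ^ α) := by
      nlinarith [Real.exp_pos (η * T ^ α)]
    have hpos : (0:ℝ) < ξ + Real.exp (η * T ^ α) := by
      linarith [Real.exp_pos (η * T ^ α)]
    have hlog : Real.log (ξ + Real.exp (η * T ^ α)) ≤ Real.log (ξ + 1) + η * T ^ α := by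
      calc Real.log (ξ + Real.exp (η * T ^ α)) ≤ Real.log ((ξ + 1) * Real.exp (η * T ^ α)) :=
            Real.log_le_log hpos hle
        _ = Real.log (ξ + 1) + η * T ^ α := by
            rw [Real.log_mul (by linarith) (Real.exp_ne_zero _), Real.log_exp]
    have hrw : η * T ^ (α - 1) = η * T ^ α / T := by
      rw [Real.rpow_sub hT0, Real.rpow_one]; ring
    calc Real.log (ξ + Real.exp (η * T ^ α)) / T
        ≤ (Real.log (ξ + 1) + η * T ^ α) / T := by
          gcongr
      _ = Real.log (ξ + 1) / T + η * T ^ (α - 1) := by rw [hrw, add_div]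

open Filter Real in
theorem stmt_17 (gi gj : ℝ) (hgap : gi > gj)
    (φi φj : ℝ → ℝ)
    (hφi : Tendsto (fun t => φi t / t) atTop (nhds 0))
    (hφj : Tendsto (fun t => φj t / t) atTop (nhds 0))
    (yi yj : ℝ → ℝ)
    (hyi : ∀ t, yi t = Real.exp (t * gi + φi t))
    (hyj : ∀ t, yj t = Real.exp (t * gj + φj t))
    (ξ η A α : ℝ) (hξ : 0 ≤ ξ) (hη : 0 ≤ η) (hA : 0 < A)
    (hα0 : 0 < α) (hα1 : α < 1) :
    (∀ᶠ T in atTop, 0 < A * yi T / (ξ + Real.exp (η * T ^ α)) - yj T) ∧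
    Tendsto (fun T => (1 / T) *
        Real.log (A * yi T / (ξ + Real.exp (η * T ^ α)) - yj T)) atTop (nhds gi) := by
  set E : ℝ → ℝ := fun T => ξ + Real.exp (η * T ^ α) with hE
  have hEpos : ∀ T, 0 < E T := fun T => by
    have := Real.exp_pos (η * T ^ α); simp only [hE]; linarith
  set u : ℝ → ℝ := fun T => A * yi T / E T with hu
  have hupos : ∀ T, 0 < u T := fun T => by
    have : 0 < yi T := by rw [hyi]; exact Real.exp_pos _
    exact div_pos (mul_pos hA this) (hEpos T)
  set r : ℝ → ℝ := fun T => yj T / u T with hr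
  have hrpos : ∀ T, 0 < r T := fun T => by
    have : 0 < yj T := by rw [hyj]; exact Real.exp_pos _
    exact div_pos this (hupos T)
  have hLt : Tendsto (fun T : ℝ => Real.log (E T) / T) atTop (nhds 0) :=
    aux_L ξ η α hξ hη hα0 hα1
  -- log u T = log A + T*gi + φi T - log (E T)
  have hlogu : ∀ T, Real.log (u T) = Real.log A + (T * gi + φi T) - Real.log (E T) := by
    intro T
    have hyiT : 0 < yi T := by rw [hyi]; positivity
    rw [hu]
    simp only
    rw [Real.log_div (mul_pos hA hyiT).ne' (hEpos T).ne',
      Real.log_mul hA.ne' hyiT.ne', hyi, Real.log_exp]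
  have hlogr : ∀ T, Real.log (r T) = (T * gj + φj T) - Real.log (u T) := by
    intro T
    rw [hr]
    simp only
    rw [Real.log_div (by rw [hyj]; positivity) (hupos T).ne', hyj, Real.log_exp]
  -- (log r T)/T → gj - gi
  have hlogrT : Tendsto (fun T => Real.log (r T) / T) atTop (nhds (gj - gi)) := by
    have h1 : Tendsto (fun T : ℝ => Real.log A / T) atTop (nhds 0) :=
      tendsto_const_nhds.div_atTop tendsto_id
    have key : Tendsto (fun T : ℝ =>
        (gj + φj T / T) - (Real.log A / T + (gi + φi T / T) - Real.log (E T) / T))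
        atTop (nhds ((gj + 0) - (0 + (gi + 0) - 0))) := by
      exact (tendsto_const_nhds.add hφj).sub ((h1.add (tendsto_const_nhds.add hφi)).sub hLt)
    simp only [add_zero, zero_add, sub_zero] at key
    refine key.congr' ?_
    filter_upwards [eventually_gt_atTop (0:ℝ)] with T hT
    rw [hlogr, hlogu]
    field_simp
  -- log r → -∞ hence r → 0
  have hrto0 : Tendsto r atTop (nhds 0) := by
    have hneg : gj - gi < 0 := by linarith
    have hlogbot : Tendsto (fun T => Real.log (r T)) atTop atBot := by
      have := Tendsto.atTop_mul_neg hneg tendsto_id hlogrT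
      refine this.congr' ?_
      filter_upwards [eventually_gt_atTop (0:ℝ)] with T hT
      field_simp
      exact mul_comm _ _
    have := Real.tendsto_exp_atBot.comp hlogbot
    refine this.congr (fun T => Real.exp_log (hrpos T))
  have hrhalf : ∀ᶠ T in atTop, r T < 1 / 2 :=
    hrto0.eventually_lt_const (by norm_num)
  have hDeq : ∀ T, A * yi T / E T - yj T = u T * (1 - r T) := by
    intro T
    have : yj T = r T * u T := by rw [hr]; simp only; rw [div_mul_cancel₀ _ (hupos T).ne']
    rw [this, hu]; ring
  have hposD : ∀ᶠ T in atTop, 0 < A * yi T / E T - yj T := by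
    filter_upwards [hrhalf] with T hT
    rw [hDeq]
    have : 0 < 1 - r T := by linarith
    exact mul_pos (hupos T) this
  refine ⟨hposD, ?_⟩
  -- limit of log(1 - r T)
  have hlog1r : Tendsto (fun T => Real.log (1 - r T)) atTop (nhds 0) := by
    have : Tendsto (fun T => 1 - r T) atTop (nhds 1) := by
      simpa using tendsto_const_nhds.sub hrto0
    have := (Real.continuousAt_log (by norm_num : (1:ℝ) ≠ 0)).tendsto.comp this
    rw [Real.log_one] at this
    exact this
  have h1 : Tendsto (fun T : ℝ => Real.log A / T) atTop (nhds 0) :=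
    tendsto_const_nhds.div_atTop tendsto_id
  have hinv : Tendsto (fun T : ℝ => 1 / T) atTop (nhds 0) := by
    simpa using tendsto_inv_atTop_zero
  have key : Tendsto (fun T : ℝ =>
      Real.log A / T + (gi + φi T / T) - Real.log (E T) / T + (1 / T) * Real.log (1 - r T))
      atTop (nhds (0 + (gi + 0) - 0 + 0 * 0)) :=
    ((h1.add (tendsto_const_nhds.add hφi)).sub hLt).add (hinv.mul hlog1r)
  simp only [add_zero, zero_add, sub_zero, zero_mul] at key
  refine key.congr' ?_
  filter_upwards [eventually_gt_atTop (0:ℝ), hrhalf] with T hT hT2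
  have h1r : 0 < 1 - r T := by linarith
  rw [hDeq, Real.log_mul (hupos T).ne' h1r.ne', hlogu]
  field_simp
end

section
/- Let g_i, g_j be real numbers with g_i > g_j, let φ_i, φ_j : ℝ → ℝ be continuous with φ_k(t)/t → 0 as t → ∞, and define y_k(t) = exp(t·g_k + φ_k(t)). Let ξ ≥ 0, η ≥ 0, A > 0 and 0 < α < 1. Then (1/T)·∫_{T−1}^{T} log( A·y_i(t)/(ξ + exp(η·t^α)) − y_j(t) ) dt → g_i as T → ∞. (This is the lower bound, obtained via Jensen's inequality and dominated convergence, showing that in the generalized reciprocity dynamics with α < 1 the growth rate of entity j is at least the defector growth rate of the strongest entity i.) -/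
open Filter Real MeasureTheory in
lemma stmt_18_aux_avg (g : ℝ) (f : ℝ → ℝ) (T₀ : ℝ) (hf : ContinuousOn f (Set.Ici T₀))
    (hlim : Tendsto (fun t => (f t - t * g) / t) atTop (nhds 0)) :
    Tendsto (fun T => (1 / T) * ∫ t in (T - 1)..T, f t) atTop (nhds g) := by
  have hint : ∀ T : ℝ, T₀ + 1 ≤ T → IntervalIntegrable f volume (T - 1) T := by
    intro T hT
    apply ContinuousOn.intervalIntegrable
    apply hf.mono
    rw [Set.uIcc_of_le (by linarith)]
    intro x hx
    exact Set.mem_Ici.2 (by linarith [hx.1])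
  have key : ∀ T : ℝ, T₀ + 1 ≤ T →
      ∫ t in (T - 1)..T, f t = g * (T - 1 / 2) + ∫ t in (T - 1)..T, (f t - t * g) := by
    intro T hT
    have h1 : IntervalIntegrable (fun t => t * g) volume (T - 1) T :=
      (continuous_id.mul continuous_const).intervalIntegrable _ _
    have h2 : IntervalIntegrable (fun t => f t - t * g) volume (T - 1) T :=
      (hint T hT).sub h1
    have h3 : ∫ t in (T - 1)..T, f t
        = (∫ t in (T - 1)..T, t * g) + ∫ t in (T - 1)..T, (f t - t * g) := by
      rw [← intervalIntegral.integral_add h1 h2]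
      congr 1; ext t; ring
    rw [h3]
    congr 1
    rw [intervalIntegral.integral_mul_const, integral_id]
    ring
  have h1 : Tendsto (fun T : ℝ => g * (T - 1 / 2) / T) atTop (nhds g) := by
    have heq : ∀ᶠ T : ℝ in atTop, g - g / 2 / T = g * (T - 1 / 2) / T := by
      filter_upwards [eventually_gt_atTop 0] with T hT
      field_simp
    have hb : Tendsto (fun T : ℝ => g - g / 2 / T) atTop (nhds g) := by
      simpa using (tendsto_const_nhds (x := g)).sub
        ((tendsto_const_nhds (x := g / 2)).div_atTop tendsto_id)
    exact hb.congr' heq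
  have h2 : Tendsto (fun T => (1 / T) * ∫ t in (T - 1)..T, (f t - t * g)) atTop (nhds 0) := by
    rw [NormedAddCommGroup.tendsto_nhds_zero]
    intro ε hε
    have hev : ∀ᶠ t in atTop, |(f t - t * g) / t| < ε / 2 := by
      have := Metric.tendsto_nhds.mp hlim (ε / 2) (half_pos hε)
      simpa only [Real.dist_eq, sub_zero] using this
    obtain ⟨t₁, ht₁⟩ := eventually_atTop.mp (hev.and (eventually_ge_atTop (max T₀ 1)))
    filter_upwards [eventually_ge_atTop (t₁ + 1), eventually_gt_atTop (0 : ℝ),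
      eventually_ge_atTop (T₀ + 1)] with T hT hTpos hTT0
    have hb : ∀ x ∈ Set.uIoc (T - 1) T, ‖f x - x * g‖ ≤ ε / 2 * T := by
      intro x hx
      rw [Set.uIoc_of_le (by linarith)] at hx
      have hxt : t₁ ≤ x := by linarith [hx.1]
      obtain ⟨habs, hge⟩ := ht₁ x hxt
      have hx1 : (1 : ℝ) ≤ x := le_trans (le_max_right T₀ 1) hge
      have hx0 : 0 < x := by linarith
      have heq2 : ‖f x - x * g‖ = |(f x - x * g) / x| * x := by
        rw [Real.norm_eq_abs, abs_div, abs_of_pos hx0]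
        field_simp
      rw [heq2]
      calc |(f x - x * g) / x| * x ≤ ε / 2 * x :=
            mul_le_mul_of_nonneg_right habs.le hx0.le
        _ ≤ ε / 2 * T := by nlinarith [hx.2, half_pos hε]
    have hnorm := intervalIntegral.norm_integral_le_of_norm_le_const hb
    have habs1 : |T - (T - 1)| = 1 := by norm_num
    rw [habs1, mul_one] at hnorm
    have : ‖(1 / T) * ∫ t in (T - 1)..T, (f t - t * g)‖
        = (1 / T) * ‖∫ t in (T - 1)..T, (f t - t * g)‖ := by
      rw [norm_mul, Real.norm_eq_abs (1 / T), abs_of_pos (by positivity)]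
    rw [this]
    have hle : (1 / T) * ‖∫ t in (T - 1)..T, (f t - t * g)‖ ≤ (1 / T) * (ε / 2 * T) :=
      mul_le_mul_of_nonneg_left hnorm (by positivity)
    have : (1 / T) * (ε / 2 * T) = ε / 2 := by field_simp
    linarith
  have hcomb : Tendsto (fun T => g * (T - 1 / 2) / T + (1 / T) * ∫ t in (T - 1)..T, (f t - t * g))
      atTop (nhds g) := by simpa using h1.add h2
  refine hcomb.congr' ?_
  filter_upwards [eventually_ge_atTop (T₀ + 1), eventually_gt_atTop (0 : ℝ)] with T hT hTpos
  rw [key T hT]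
  field_simp

open Filter Real in
theorem stmt_18 (gi gj : ℝ) (hgap : gi > gj)
    (φi φj : ℝ → ℝ) (hφic : Continuous φi) (hφjc : Continuous φj)
    (hφi : Tendsto (fun t => φi t / t) atTop (nhds 0))
    (hφj : Tendsto (fun t => φj t / t) atTop (nhds 0))
    (yi yj : ℝ → ℝ)
    (hyi : ∀ t, yi t = Real.exp (t * gi + φi t))
    (hyj : ∀ t, yj t = Real.exp (t * gj + φj t))
    (ξ η A α : ℝ) (hξ : 0 ≤ ξ) (hη : 0 ≤ η) (hA : 0 < A)
    (hα0 : 0 < α) (hα1 : α < 1) :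
    Tendsto (fun T => (1 / T) *
        ∫ t in (T - 1)..T,
          Real.log (A * yi t / (ξ + Real.exp (η * t ^ α)) - yj t)) atTop (nhds gi) := by
  -- abbreviations (as plain functions via `have` of equalities is clumsy; use local defs)
  have hDpos : ∀ t : ℝ, (0 : ℝ) < ξ + Real.exp (η * t ^ α) := fun t =>
    add_pos_of_nonneg_of_pos hξ (Real.exp_pos _)
  -- e t
  set e : ℝ → ℝ := fun t => Real.log (ξ + Real.exp (η * t ^ α)) + t * (gj - gi)
      + φj t - φi t - Real.log A with hedef
  -- log (D t) / t → 0
  have hlogD : Tendsto (fun t : ℝ => Real.log (ξ + Real.exp (η * t ^ α)) / t) atTop (nhds 0) := by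
    have hup : Tendsto (fun t : ℝ => Real.log (ξ + 1) / t + η * t ^ (α - 1)) atTop (nhds 0) := by
      have h1 : Tendsto (fun t : ℝ => Real.log (ξ + 1) / t) atTop (nhds 0) :=
        tendsto_const_nhds.div_atTop tendsto_id
      have h2 : Tendsto (fun t : ℝ => η * t ^ (α - 1)) atTop (nhds 0) := by
        have := (tendsto_rpow_neg_atTop (by linarith : (0 : ℝ) < 1 - α)).const_mul η
        simp only [neg_sub] at this
        simpa using this
      simpa using h1.add h2
    refine tendsto_of_tendsto_of_tendsto_of_le_of_le' tendsto_const_nhds hup ?_ ?_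
    · filter_upwards [eventually_ge_atTop (1 : ℝ)] with t ht
      have ht0 : (0 : ℝ) < t := by linarith
      have h1 : (1 : ℝ) ≤ ξ + Real.exp (η * t ^ α) := by
        have : (0 : ℝ) ≤ η * t ^ α := mul_nonneg hη (Real.rpow_nonneg (by linarith) α)
        have := Real.one_le_exp this
        linarith
      exact div_nonneg (Real.log_nonneg h1) ht0.le
    · filter_upwards [eventually_ge_atTop (1 : ℝ)] with t ht
      have ht0 : (0 : ℝ) < t := by linarith
      have hE1 : (1 : ℝ) ≤ Real.exp (η * t ^ α) :=
        Real.one_le_exp (mul_nonneg hη (Real.rpow_nonneg (by linarith) α))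
      have hle : ξ + Real.exp (η * t ^ α) ≤ (ξ + 1) * Real.exp (η * t ^ α) := by nlinarith
      have hlog : Real.log (ξ + Real.exp (η * t ^ α))
          ≤ Real.log (ξ + 1) + η * t ^ α := by
        calc Real.log (ξ + Real.exp (η * t ^ α)) ≤ Real.log ((ξ + 1) * Real.exp (η * t ^ α)) :=
              Real.log_le_log (hDpos t) hle
          _ = Real.log (ξ + 1) + η * t ^ α := by
              rw [Real.log_mul (by linarith) (Real.exp_ne_zero _), Real.log_exp]
      have hpow : t ^ (α - 1) = t ^ α / t := by
        rw [Real.rpow_sub ht0, Real.rpow_one]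
      rw [div_le_iff₀ ht0, hpow]
      field_simp
      exact hlog
  -- e t / t → gj - gi
  have he_div : Tendsto (fun t => e t / t) atTop (nhds (gj - gi)) := by
    have base : Tendsto (fun t : ℝ => Real.log (ξ + Real.exp (η * t ^ α)) / t + (gj - gi)
        + φj t / t - φi t / t - Real.log A / t) atTop
        (nhds (0 + (gj - gi) + 0 - 0 - 0)) :=
      (((hlogD.add tendsto_const_nhds).add hφj).sub hφi).sub
        (tendsto_const_nhds.div_atTop tendsto_id)
    rw [show (0 : ℝ) + (gj - gi) + 0 - 0 - 0 = gj - gi by ring] at base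
    refine base.congr' ?_
    filter_upwards [eventually_gt_atTop (0 : ℝ)] with t ht
    rw [hedef]
    field_simp
  -- e → -∞
  have he_bot : Tendsto e atTop atBot := by
    have hc : (gj - gi) / 2 < 0 := by linarith
    have hev : ∀ᶠ t in atTop, e t ≤ (gj - gi) / 2 * t := by
      have h1 : ∀ᶠ t in atTop, e t / t < (gj - gi) / 2 :=
        he_div.eventually_lt_const (by linarith)
      filter_upwards [h1, eventually_gt_atTop (0 : ℝ)] with t h1 ht
      have := (div_lt_iff₀ ht).mp h1
      linarith
    have hb : Tendsto (fun t : ℝ => (gj - gi) / 2 * t) atTop atBot :=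
      Tendsto.const_mul_atTop_of_neg hc tendsto_id
    exact tendsto_atBot_mono' atTop hev hb
  -- exp (e t) → 0
  have hw : Tendsto (fun t => Real.exp (e t)) atTop (nhds 0) :=
    Real.tendsto_exp_atBot.comp he_bot
  -- key identity
  have key₁ : ∀ t : ℝ, A * yi t / (ξ + Real.exp (η * t ^ α)) - yj t
      = Real.exp (Real.log A + t * gi + φi t - Real.log (ξ + Real.exp (η * t ^ α)))
        * (1 - Real.exp (e t)) := by
    intro t
    have h1 : Real.exp (Real.log A + t * gi + φi t - Real.log (ξ + Real.exp (η * t ^ α)))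
        = A * yi t / (ξ + Real.exp (η * t ^ α)) := by
      rw [hyi, show Real.log A + t * gi + φi t - Real.log (ξ + Real.exp (η * t ^ α))
          = Real.log A + (t * gi + φi t) + -Real.log (ξ + Real.exp (η * t ^ α)) by ring,
        Real.exp_add, Real.exp_add, Real.exp_neg, Real.exp_log hA, Real.exp_log (hDpos t)]
      ring
    rw [mul_sub, mul_one, ← Real.exp_add,
      show Real.log A + t * gi + φi t - Real.log (ξ + Real.exp (η * t ^ α)) + e t
        = t * gj + φj t by rw [hedef]; ring, ← hyj, h1]
  -- positivity and value of f eventually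
  have hposval : ∀ t : ℝ, e t < 0 →
      (0 < A * yi t / (ξ + Real.exp (η * t ^ α)) - yj t ∧
       Real.log (A * yi t / (ξ + Real.exp (η * t ^ α)) - yj t)
        = Real.log A + t * gi + φi t - Real.log (ξ + Real.exp (η * t ^ α))
          + Real.log (1 - Real.exp (e t))) := by
    intro t het
    have h1 : (0 : ℝ) < 1 - Real.exp (e t) := by
      have := Real.exp_lt_one_iff.mpr het
      linarith
    constructor
    · rw [key₁ t]
      exact mul_pos (Real.exp_pos _) h1
    · rw [key₁ t, Real.log_mul (Real.exp_ne_zero _) h1.ne', Real.log_exp]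
  -- limit of (f t - t * gi) / t
  have hlim : Tendsto (fun t => (Real.log (A * yi t / (ξ + Real.exp (η * t ^ α)) - yj t)
      - t * gi) / t) atTop (nhds 0) := by
    have hlog1m : Tendsto (fun t => Real.log (1 - Real.exp (e t))) atTop (nhds 0) := by
      have h1 : Tendsto (fun t => 1 - Real.exp (e t)) atTop (nhds 1) := by
        simpa using tendsto_const_nhds.sub hw
      have := (Real.continuousAt_log one_ne_zero).tendsto.comp h1
      simpa [Function.comp_def] using this
    have base : Tendsto (fun t : ℝ => Real.log A / t + φi t / t
        - Real.log (ξ + Real.exp (η * t ^ α)) / t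
        + Real.log (1 - Real.exp (e t)) / t) atTop (nhds (0 + 0 - 0 + 0)) :=
      ((((tendsto_const_nhds.div_atTop tendsto_id).add hφi).sub hlogD).add
        (hlog1m.div_atTop tendsto_id))
    rw [show (0 : ℝ) + 0 - 0 + 0 = 0 by ring] at base
    refine base.congr' ?_
    filter_upwards [he_bot.eventually (eventually_lt_atBot (0 : ℝ)),
      eventually_gt_atTop (0 : ℝ)] with t het ht
    rw [(hposval t het).2]
    field_simp
    ring
  -- choose T₀ with positivity on Ici T₀
  obtain ⟨T₀, hT₀⟩ := eventually_atTop.mp (he_bot.eventually (eventually_lt_atBot (0 : ℝ)))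
  -- continuity
  have hyic : Continuous yi := by
    have : yi = fun t => Real.exp (t * gi + φi t) := funext hyi
    rw [this]
    exact Real.continuous_exp.comp ((continuous_id.mul continuous_const).add hφic)
  have hyjc : Continuous yj := by
    have : yj = fun t => Real.exp (t * gj + φj t) := funext hyj
    rw [this]
    exact Real.continuous_exp.comp ((continuous_id.mul continuous_const).add hφjc)
  have hpowc : Continuous fun t : ℝ => t ^ α :=
    continuous_iff_continuousAt.2 fun x => Real.continuousAt_rpow_const x α (Or.inr hα0.le)
  have hgc : Continuous fun t : ℝ => A * yi t / (ξ + Real.exp (η * t ^ α)) - yj t :=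
    ((continuous_const.mul hyic).div
      (continuous_const.add (Real.continuous_exp.comp (continuous_const.mul hpowc)))
      fun t => (hDpos t).ne').sub hyjc
  have hfc : ContinuousOn
      (fun t : ℝ => Real.log (A * yi t / (ξ + Real.exp (η * t ^ α)) - yj t))
      (Set.Ici T₀) :=
    ContinuousOn.log hgc.continuousOn fun x hx => ((hposval x (hT₀ x hx)).1).ne'
  exact stmt_18_aux_avg gi _ T₀ hfc hlim
end
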